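/- arXiv:2104.05605 — 4 statements merged into one kernel-verified Lean document; each statement's English description precedes it below -/
import Mathlib

section
/- Let A be the 2m×2m block matrix A = [[I, -η J J^T],[μ I, (1-μ) I]] where J ∈ ℝ^{m×n}, η, μ > 0. If λ is an eigenvalue of A, then there exists an eigenvalue s of J J^T such that (1-λ)²/μ - (1-λ) + η s = 0, i.e., λ ∈ {1 - μ/2 + sqrt(μ²/4 - μ η s), 1 - μ/2 - sqrt(μ²/4 - μ η s)}. -/
open Matrix

/-- If λ is an eigenvalue of the block matrix A = [[I, -η J Jᵀ],[μ I, (1-μ) I]], then there is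
an eigenvalue s of J Jᵀ with (1-λ)²/μ - (1-λ) + η s = 0, i.e.
λ ∈ {1 - μ/2 + √(μ²/4 - μηs), 1 - μ/2 - √(μ²/4 - μηs)}. -/
theorem stmt0 {m n : ℕ} (J : Matrix (Fin m) (Fin n) ℝ) (η μ : ℝ) (hη : 0 < η) (hμ : 0 < μ)
    (A : Matrix (Fin m ⊕ Fin m) (Fin m ⊕ Fin m) ℝ)
    (hA : A = Matrix.fromBlocks (1 : Matrix (Fin m) (Fin m) ℝ) ((-η) • (J * Jᵀ))
      (μ • (1 : Matrix (Fin m) (Fin m) ℝ)) ((1 - μ) • (1 : Matrix (Fin m) (Fin m) ℝ)))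
    (lam : ℂ) (hlam : lam ∈ spectrum ℂ (A.map (algebraMap ℝ ℂ))) :
    ∃ s ∈ spectrum ℂ ((J * Jᵀ).map (algebraMap ℝ ℂ)), ∃ w : ℂ,
      w ^ 2 = (μ : ℂ) ^ 2 / 4 - (μ : ℂ) * (η : ℂ) * s ∧
      (1 - lam) ^ 2 / (μ : ℂ) - (1 - lam) + (η : ℂ) * s = 0 ∧
      (lam = 1 - (μ : ℂ) / 2 + w ∨ lam = 1 - (μ : ℂ) / 2 - w) := by
  classical
  set K : Matrix (Fin m) (Fin m) ℂ := (J * Jᵀ).map (algebraMap ℝ ℂ) with hK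
  have hμc : (μ : ℂ) ≠ 0 := Complex.ofReal_ne_zero.mpr hμ.ne'
  have hηc : (η : ℂ) ≠ 0 := Complex.ofReal_ne_zero.mpr hη.ne'
  -- rewrite the mapped matrix as a block matrix over ℂ
  have hAmap : A.map (algebraMap ℝ ℂ) =
      Matrix.fromBlocks (1 : Matrix (Fin m) (Fin m) ℂ) ((-(η : ℂ)) • K)
        ((μ : ℂ) • (1 : Matrix (Fin m) (Fin m) ℂ))
        ((1 - (μ : ℂ)) • (1 : Matrix (Fin m) (Fin m) ℂ)) := by
    subst hA
    rw [Matrix.fromBlocks_map]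
    ext i j
    rcases i with i | i <;> rcases j with j | j <;> by_cases hij : i = j <;>
      · simp only [Matrix.fromBlocks_apply₁₁, Matrix.fromBlocks_apply₁₂,
          Matrix.fromBlocks_apply₂₁, Matrix.fromBlocks_apply₂₂, Matrix.map_apply,
          Matrix.smul_apply, Matrix.neg_apply, Matrix.one_apply, hij, if_true, if_false,
          smul_eq_mul, hK]
        push_cast
        try ring
        try simp [Matrix.one_apply, hij]
        try ring
  -- get an eigenvector
  rw [← AlgEquiv.spectrum_eq (Matrix.toLinAlgEquiv' (R := ℂ) (n := Fin m ⊕ Fin m)),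
    ← Module.End.hasEigenvalue_iff_mem_spectrum] at hlam
  obtain ⟨v, hv, hv0⟩ := hlam.exists_hasEigenvector
  rw [Module.End.mem_eigenspace_iff] at hv
  have hv' : (A.map (algebraMap ℝ ℂ)) *ᵥ v = lam • v := by
    simpa [Matrix.toLinAlgEquiv'_apply, Matrix.toLin'_apply] using hv
  set x : Fin m → ℂ := v ∘ Sum.inl with hx
  set y : Fin m → ℂ := v ∘ Sum.inr with hy
  have hvsum : v = Sum.elim x y := by ext (i | i) <;> rfl
  rw [hAmap, hvsum, Matrix.fromBlocks_mulVec] at hv'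
  have e1 : ∀ i, x i + (-(η : ℂ)) * (K *ᵥ y) i = lam * x i := by
    intro i
    simpa [Matrix.neg_mulVec, Matrix.smul_mulVec, Matrix.one_mulVec] using congrFun hv' (Sum.inl i)
  have e2 : ∀ i, (μ : ℂ) * x i + (1 - (μ : ℂ)) * y i = lam * y i := by
    intro i
    simpa [Matrix.smul_mulVec, Matrix.one_mulVec] using congrFun hv' (Sum.inr i)
  -- y ≠ 0
  have hy0 : y ≠ 0 := by
    intro h
    apply hv0
    have hx0 : ∀ i, x i = 0 := by
      intro i
      have := e2 i
      rw [h] at this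
      simp at this
      rcases this with h' | h'
      · exact absurd h' hμ.ne'
      · exact h'
    rw [hvsum, h]
    ext (i | i) <;> simp [hx0]
  -- K y = s y
  set s : ℂ := (1 - lam) * (lam - 1 + μ) / ((μ : ℂ) * η) with hs
  have hKy : K *ᵥ y = s • y := by
    ext i
    have h1 := e1 i
    have h2 := e2 i
    simp only [Pi.smul_apply, smul_eq_mul, hs]
    rw [div_mul_eq_mul_div, eq_div_iff (mul_ne_zero hμc hηc)]
    linear_combination (-(μ : ℂ)) * h1 + (1 - lam) * h2
  have hsmem : s ∈ spectrum ℂ K := by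
    rw [← AlgEquiv.spectrum_eq (Matrix.toLinAlgEquiv' (R := ℂ) (n := Fin m)),
      ← Module.End.hasEigenvalue_iff_mem_spectrum]
    refine Module.End.hasEigenvalue_of_hasEigenvector ⟨?_, hy0⟩
    rw [Module.End.mem_eigenspace_iff]
    simpa [Matrix.toLinAlgEquiv'_apply, Matrix.toLin'_apply] using hKy
  refine ⟨s, hsmem, (1 - lam) - (μ : ℂ) / 2, ?_, ?_, Or.inr ?_⟩
  · rw [hs]; field_simp; ring
  · rw [hs]; field_simp; ring
  · ring
end

section
/- Let V ∈ ℝ^{m×k}, and for W ∈ ℝ^{k×d} and data points z₁,…,z_n ∈ ℝ^d define f(W) = (1/n) Σᵢ V φ(W zᵢ) with φ = ReLU (applied entrywise). The Jacobian J(W) of f (with respect to vec(W)) satisfies J(W) J(W)^T = (1/n²) V D² V^T, where D is the k×k diagonal matrix with D_ℓℓ = ‖Σᵢ zᵢ φ'(w_ℓ^T zᵢ)‖₂ = ‖Z^T φ'(Z w_ℓ)‖₂, Z ∈ ℝ^{n×d} the matrix whose rows are the zᵢ, and w_ℓ the ℓ-th row of W. -/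
open Matrix Kronecker
/-- For f(W) = (1/n) Σᵢ V φ(W zᵢ) with φ = ReLU, the Jacobian
J(W) = (1/n) Σᵢ (V diag(φ'(W zᵢ))) ⊗ zᵢᵀ satisfies
J(W) J(W)ᵀ = (1/n²) V D² Vᵀ with D_ℓℓ = ‖Zᵀ φ'(Z w_ℓ)‖₂. -/
theorem stmt11 {m k d n : ℕ} (V : Matrix (Fin m) (Fin k) ℝ)
    (z : Fin n → Fin d → ℝ) (W : Matrix (Fin k) (Fin d) ℝ)
    (step : ℝ → ℝ) (hstep : step = fun x => if 0 ≤ x then (1 : ℝ) else 0)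
    (J : Matrix (Fin m) (Fin k × Fin d) ℝ)
    (hJ : J = ((1 : ℝ) / n) • ∑ i, Matrix.reindex (Equiv.prodPUnit (Fin m)) (Equiv.refl _)
      ((V * Matrix.diagonal fun ℓ => step (∑ j, W ℓ j * z i j)) ⊗ₖ
        (Matrix.of fun (_ : PUnit) j => z i j))) :
    J * Jᵀ = ((1 : ℝ) / (n : ℝ) ^ 2) •
      (V * Matrix.diagonal
        (fun ℓ => ∑ j, (∑ i, z i j * step (∑ l, W ℓ l * z i l)) ^ 2) * Vᵀ) := by
  subst hJ
  ext a b
  simp only [Matrix.mul_apply, Matrix.smul_apply, Matrix.sum_apply, Matrix.reindex_apply,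
    Matrix.submatrix_apply, Matrix.kroneckerMap_apply, Matrix.transpose_apply,
    Matrix.of_apply, smul_eq_mul, Fintype.sum_prod_type,
    Matrix.diagonal_apply, mul_ite, ite_mul, mul_zero, zero_mul,
    Finset.sum_ite_eq, Finset.sum_ite_eq', Finset.mem_univ, if_true,
    Equiv.prodPUnit_symm_apply, Equiv.refl_symm, Equiv.refl_apply]
  rw [Finset.mul_sum]
  refine Finset.sum_congr rfl fun ℓ _ => ?_
  have hT : ∀ y : Fin d, (∑ i, z i y * step (∑ l, W ℓ l * z i l))
      = ∑ x, step (∑ j, W ℓ j * z x j) * z x y :=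
    fun y => Finset.sum_congr rfl fun i _ => mul_comm _ _
  simp only [hT]
  rw [Finset.mul_sum, Finset.sum_mul, Finset.mul_sum]
  refine Finset.sum_congr rfl fun y _ => ?_
  simp only [mul_assoc, ← Finset.mul_sum]
  ring
end

section
/- Let D = diag(d₁,…,d_k) be a diagonal matrix and g ~ N(0, I_k). Then E‖Dg‖₂ ≥ sqrt(‖d‖₂² - ‖d‖_∞²), where ‖d‖₂² = Σᵢ dᵢ² and ‖d‖_∞ = maxᵢ |dᵢ|. -/
/-!
Let `ρ_ε(g) = √(ε + ∑ (dᵢ gᵢ)²)` with `ε > 0`, `S = ∑ dᵢ²` and `m ≥ |dᵢ|` for all `i`.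
Gaussian integration by parts, `E[gᵢ h(g)] = E[∂ᵢh(g)]`, applied to `h = ∂ᵢρ_ε = dᵢ² gᵢ / ρ_ε`
and summed over `i` gives `E[ρ_ε] = ε E[1/ρ_ε] + E[Δρ_ε]`, where
`Δρ_ε = ∑ dᵢ² (ρ_ε² - dᵢ² gᵢ²) / ρ_ε³ ≥ (S - m²) / ρ_ε`.
Hence `E[ρ_ε] ≥ (S - m²) E[1/ρ_ε] ≥ (S - m²) / E[ρ_ε]` by Jensen, i.e. `E[ρ_ε]² ≥ S - m²`,
and `ε → 0` gives the bound for `‖Dg‖₂`.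
-/

open MeasureTheory ProbabilityTheory Real Finset
open scoped NNReal

lemma hasDerivAt_gaussianPDFReal (μ : ℝ) (v : ℝ≥0) (x : ℝ) :
    HasDerivAt (gaussianPDFReal μ v) (-((x - μ) / v) * gaussianPDFReal μ v x) x := by
  have h : HasDerivAt (fun y => -(y - μ) ^ 2 / (2 * v)) (-(2 * (x - μ)) / (2 * v)) x := by
    simpa using (((hasDerivAt_id x).sub_const μ).pow 2).neg.div_const (2 * (v : ℝ))
  refine (h.exp.const_mul (√(2 * π * v))⁻¹).congr_deriv ?_
  simp only [gaussianPDFReal_def]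
  by_cases hv : (v : ℝ) = 0
  · simp [hv]
  · field_simp

lemma integrable_gaussianReal_iff {μ : ℝ} {v : ℝ≥0} (hv : v ≠ 0) {f : ℝ → ℝ} :
    Integrable f (gaussianReal μ v) ↔ Integrable (fun x => gaussianPDFReal μ v x * f x) := by
  rw [gaussianReal_of_var_ne_zero _ hv, integrable_withDensity_iff_integrable_smul'
    (measurable_gaussianPDF _ _) (ae_of_all _ fun _ => gaussianPDF_lt_top)]
  simp only [toReal_gaussianPDF, smul_eq_mul]

theorem integral_sub_mul_gaussianReal {μ : ℝ} {v : ℝ≥0} (hv : v ≠ 0) {ψ ψ' : ℝ → ℝ}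
    (hψ : ∀ x, HasDerivAt ψ (ψ' x) x) (hψ_int : Integrable ψ (gaussianReal μ v))
    (hxψ_int : Integrable (fun x => (x - μ) * ψ x) (gaussianReal μ v))
    (hψ'_int : Integrable ψ' (gaussianReal μ v)) :
    ∫ x, (x - μ) * ψ x ∂gaussianReal μ v = v * ∫ x, ψ' x ∂gaussianReal μ v := by
  set p := gaussianPDFReal μ v
  rw [integrable_gaussianReal_iff hv] at hψ_int hxψ_int hψ'_int
  have h_eq : ψ * (fun x => -((x - μ) / v) * p x) =
      fun x => -(v : ℝ)⁻¹ * (p x * ((x - μ) * ψ x)) := by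
    ext x; simp only [Pi.mul_apply]; ring
  have ibp : ∫ x, ψ x * (-((x - μ) / v) * p x) = -∫ x, ψ' x * p x :=
    integral_mul_deriv_eq_deriv_mul_of_integrable (fun x _ => hψ x)
      (fun x _ => hasDerivAt_gaussianPDFReal μ v x) (h_eq ▸ hxψ_int.const_mul _)
      (by simpa only [Pi.mul_def, mul_comm] using hψ'_int)
      (by simpa only [Pi.mul_def, mul_comm] using hψ_int)
  simp only [integral_gaussianReal_eq_integral_smul hv, smul_eq_mul]
  calc ∫ x, p x * ((x - μ) * ψ x) = -v * ∫ x, ψ x * (-((x - μ) / v) * p x) := by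
        rw [← integral_const_mul]; congr 1; ext x; field_simp
    _ = v * ∫ x, p x * ψ' x := by simp only [ibp, mul_comm (ψ' _)]; ring

theorem integral_sub_mul_pi_gaussianReal {n : ℕ} {μ : Fin (n + 1) → ℝ} {v : Fin (n + 1) → ℝ≥0}
    {i : Fin (n + 1)} (hv : v i ≠ 0) {F F' : (Fin (n + 1) → ℝ) → ℝ}
    (hF : ∀ x y, HasDerivAt (fun t => F (i.insertNth t y)) (F' (i.insertNth x y)) x)
    (hF_int : Integrable F (Measure.pi fun j => gaussianReal (μ j) (v j)))
    (hgF_int : Integrable (fun g => (g i - μ i) * F g)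
      (Measure.pi fun j => gaussianReal (μ j) (v j)))
    (hF'_int : Integrable F' (Measure.pi fun j => gaussianReal (μ j) (v j))) :
    ∫ g, (g i - μ i) * F g ∂Measure.pi (fun j => gaussianReal (μ j) (v j)) =
      v i * ∫ g, F' g ∂Measure.pi (fun j => gaussianReal (μ j) (v j)) := by
  set Q := (gaussianReal (μ i) (v i)).prod
    (Measure.pi fun j => gaussianReal (μ (i.succAbove j)) (v (i.succAbove j)))
  set e := MeasurableEquiv.piFinSuccAbove (fun _ => ℝ) i
  have he : MeasurePreserving e.symm Q _ :=
    (measurePreserving_piFinSuccAbove (fun j => gaussianReal (μ j) (v j)) i).symm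
  have he_apply (x : ℝ) (y : Fin n → ℝ) : e.symm (x, y) = i.insertNth x y := rfl
  have transfer {f : (Fin (n + 1) → ℝ) → ℝ} (hf : Integrable f (Measure.pi _)) :
      Integrable (fun z => f (e.symm z)) Q :=
    he.integrable_comp_of_integrable hf
  rw [← he.integral_comp', ← he.integral_comp', ← integral_const_mul,
    integral_prod_symm _ (transfer hgF_int), integral_prod_symm _ ((transfer hF'_int).const_mul _)]
  refine integral_congr_ae ?_
  filter_upwards [(transfer hF_int).prod_left_ae, (transfer hgF_int).prod_left_ae,
    (transfer hF'_int).prod_left_ae] with y h₁ h₂ h₃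
  simp only [he_apply, Fin.insertNth_apply_same] at h₁ h₂ h₃ ⊢
  rw [integral_const_mul]
  exact integral_sub_mul_gaussianReal hv (hF · y) h₁ h₂ h₃

lemma hasDerivAt_mul_div_sqrt {c : ℝ} (hc : 0 < c) (a b x : ℝ) :
    HasDerivAt (fun t => a * t / √(c + (b * t) ^ 2)) (a * c / √(c + (b * x) ^ 2) ^ 3) x := by
  have hu : 0 < c + (b * x) ^ 2 := by positivity
  have hq : HasDerivAt (fun t => c + (b * t) ^ 2) (2 * b ^ 2 * x) x :=
    ((((hasDerivAt_id x).const_mul b).pow 2).const_add c).congr_deriv (by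
      simp only [Nat.cast_ofNat, id_eq, Nat.add_one_sub_one, pow_one, mul_one]; ring)
  refine (((hasDerivAt_id x).const_mul a).div (hq.sqrt hu.ne') (sqrt_pos.2 hu).ne').congr_deriv ?_
  have h2 := sq_sqrt hu.le
  simp only [id, mul_one]
  field_simp
  rw [← mul_pow, h2]
  ring

theorem inv_integral_le_integral_inv {α : Type*} [MeasurableSpace α] {P : Measure α}
    [IsProbabilityMeasure P] {f : α → ℝ} (hf : ∀ x, 0 < f x) (hf_int : Integrable f P)
    (hf_inv_int : Integrable (fun x => (f x)⁻¹) P) :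
    (∫ x, f x ∂P)⁻¹ ≤ ∫ x, (f x)⁻¹ ∂P := by
  set I := ∫ x, f x ∂P
  have hI : 0 < I := by
    rw [integral_pos_iff_support_of_nonneg (fun x => (hf x).le) hf_int,
      Set.eq_univ_of_forall fun x => Function.mem_support.2 (hf x).ne']
    simp
  have h_tangent (x : α) : 2 / I - f x / I ^ 2 ≤ (f x)⁻¹ := by
    have hfx := hf x
    have h_eq : (f x)⁻¹ - (2 / I - f x / I ^ 2) = (f x - I) ^ 2 / (f x * I ^ 2) := by
      field_simp; ring
    linarith [h_eq ▸ (by positivity : 0 ≤ (f x - I) ^ 2 / (f x * I ^ 2))]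
  calc I⁻¹ = 2 / I - I / I ^ 2 := by field_simp; ring
    _ = ∫ x, (2 / I - f x / I ^ 2) ∂P := by
        rw [integral_sub (integrable_const _) (hf_int.div_const _), integral_const, integral_div]
        simp [I]
    _ ≤ ∫ x, (f x)⁻¹ ∂P :=
        integral_mono ((integrable_const _).sub (hf_int.div_const _)) hf_inv_int h_tangent

local notation "γ" => Measure.pi fun _ => gaussianReal 0 1

noncomputable def smoothedNorm {n : ℕ} (d : Fin n → ℝ) (ε : ℝ) (g : Fin n → ℝ) : ℝ :=
  √(ε + ∑ i, (d i * g i) ^ 2)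

section smoothedNorm

variable {n : ℕ} (d : Fin n → ℝ) {ε : ℝ}

lemma sq_smoothedNorm (hε : 0 ≤ ε) (g : Fin n → ℝ) :
    smoothedNorm d ε g ^ 2 = ε + ∑ i, (d i * g i) ^ 2 :=
  sq_sqrt (by positivity)

lemma sqrt_le_smoothedNorm (g : Fin n → ℝ) : √ε ≤ smoothedNorm d ε g :=
  sqrt_le_sqrt (le_add_of_nonneg_right (by positivity))

lemma smoothedNorm_pos (hε : 0 < ε) (g : Fin n → ℝ) : 0 < smoothedNorm d ε g :=
  (sqrt_pos.2 hε).trans_le (sqrt_le_smoothedNorm d g)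

lemma abs_mul_le_smoothedNorm (hε : 0 ≤ ε) (g : Fin n → ℝ) (i : Fin n) :
    |d i * g i| ≤ smoothedNorm d ε g := by
  refine abs_le_sqrt ((single_le_sum (fun j _ => sq_nonneg (d j * g j)) (mem_univ i)).trans ?_)
  exact le_add_of_nonneg_left hε

lemma sq_mul_le_sq_smoothedNorm (hε : 0 ≤ ε) (g : Fin n → ℝ) (i : Fin n) :
    (d i * g i) ^ 2 ≤ smoothedNorm d ε g ^ 2 := by
  rw [← sq_abs]
  exact pow_le_pow_left₀ (abs_nonneg _) (abs_mul_le_smoothedNorm d hε g i) 2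

lemma smoothedNorm_le_add {δ : ℝ} (hδ : 0 ≤ δ) (g : Fin n → ℝ) :
    smoothedNorm d (δ ^ 2) g ≤ δ + smoothedNorm d 0 g := by
  have hq : 0 ≤ ∑ i, (d i * g i) ^ 2 := by positivity
  rw [smoothedNorm, smoothedNorm, zero_add, sqrt_le_left (by positivity), add_sq, sq_sqrt hq]
  nlinarith [mul_nonneg hδ (sqrt_nonneg (∑ i, (d i * g i) ^ 2))]

lemma smoothedNorm_insertNth (d : Fin (n + 1) → ℝ) (ε : ℝ) (i : Fin (n + 1)) (t : ℝ)
    (y : Fin n → ℝ) :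
    smoothedNorm d ε (i.insertNth t y) =
      √((ε + ∑ j, (d (i.succAbove j) * y j) ^ 2) + (d i * t) ^ 2) := by
  rw [smoothedNorm, Fin.sum_univ_succAbove _ i]
  simp only [Fin.insertNth_apply_same, Fin.insertNth_apply_succAbove]
  ring_nf

lemma continuous_smoothedNorm (ε : ℝ) : Continuous (smoothedNorm d ε) := by
  unfold smoothedNorm; fun_prop

lemma integrable_smoothedNorm (hε : 0 ≤ ε) : Integrable (smoothedNorm d ε) γ := by
  refine ((memLp_two_iff_integrable_sq (continuous_smoothedNorm d ε).aestronglyMeasurable).2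
    ?_).integrable one_le_two
  have h_sq (i : Fin n) : Integrable (fun g : Fin n → ℝ => g i ^ 2) γ :=
    integrable_comp_eval (f := fun x => x ^ 2) (memLp_id_gaussianReal 2).integrable_sq
  simp only [sq_smoothedNorm d hε, mul_pow]
  exact (integrable_const ε).add (integrable_finsetSum _ fun i _ => (h_sq i).const_mul _)

lemma integrable_inv_smoothedNorm (hε : 0 < ε) :
    Integrable (fun g => (smoothedNorm d ε g)⁻¹) γ := by
  have h_cont : Continuous fun g => (smoothedNorm d ε g)⁻¹ :=
    (continuous_smoothedNorm d ε).inv₀ fun g => (smoothedNorm_pos d hε g).ne'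
  refine .of_bound h_cont.aestronglyMeasurable (√ε)⁻¹ (ae_of_all _ fun g => ?_)
  rw [norm_inv, norm_of_nonneg (smoothedNorm_pos d hε g).le]
  exact inv_anti₀ (sqrt_pos.2 hε) (sqrt_le_smoothedNorm d g)

lemma integrable_sq_mul_div_smoothedNorm (hε : 0 < ε) (i : Fin n) :
    Integrable (fun g => d i ^ 2 * g i / smoothedNorm d ε g) γ := by
  refine .of_bound (((continuous_const.mul (continuous_apply i)).div
    (continuous_smoothedNorm d ε) fun g => (smoothedNorm_pos d hε g).ne').aestronglyMeasurable)
    |d i| (ae_of_all _ fun g => ?_)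
  have hρ := smoothedNorm_pos d hε g
  rw [norm_eq_abs, abs_div, abs_of_pos hρ, div_le_iff₀ hρ, sq, mul_assoc, abs_mul]
  exact mul_le_mul_of_nonneg_left (abs_mul_le_smoothedNorm d hε.le g i) (abs_nonneg _)

lemma integrable_mul_sq_mul_div_smoothedNorm (hε : 0 < ε) (i : Fin n) :
    Integrable (fun g => g i * (d i ^ 2 * g i / smoothedNorm d ε g)) γ := by
  refine (integrable_smoothedNorm d hε.le).mono' ((continuous_apply i).aestronglyMeasurable.mul
    (integrable_sq_mul_div_smoothedNorm d hε i).aestronglyMeasurable) (ae_of_all _ fun g => ?_)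
  have hρ := smoothedNorm_pos d hε g
  have h_eq : g i * (d i ^ 2 * g i / smoothedNorm d ε g) =
      (d i * g i) ^ 2 / smoothedNorm d ε g := by ring
  rw [h_eq, norm_of_nonneg (by positivity), div_le_iff₀ hρ, ← sq]
  exact sq_mul_le_sq_smoothedNorm d hε.le g i

lemma integrable_sq_mul_sub_div_smoothedNorm (hε : 0 < ε) (i : Fin n) :
    Integrable (fun g => d i ^ 2 * (smoothedNorm d ε g ^ 2 - (d i * g i) ^ 2) /
      smoothedNorm d ε g ^ 3) γ := by
  refine .of_bound (Continuous.aestronglyMeasurable ?_) (d i ^ 2 / √ε) (ae_of_all _ fun g => ?_)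
  · exact (continuous_const.mul (((continuous_smoothedNorm d ε).pow 2).sub
      ((continuous_const.mul (continuous_apply i)).pow 2))).div
      ((continuous_smoothedNorm d ε).pow 3) fun g => (pow_pos (smoothedNorm_pos d hε g) 3).ne'
  set ρ := smoothedNorm d ε g
  have hρ : 0 < ρ := smoothedNorm_pos d hε g
  have h_sub : 0 ≤ ρ ^ 2 - (d i * g i) ^ 2 :=
    sub_nonneg.2 (sq_mul_le_sq_smoothedNorm d hε.le g i)
  rw [norm_of_nonneg (by positivity), div_le_div_iff₀ (by positivity) (sqrt_pos.2 hε)]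
  calc d i ^ 2 * (ρ ^ 2 - (d i * g i) ^ 2) * √ε ≤ d i ^ 2 * ρ ^ 2 * √ε := by
        gcongr; linarith [sq_nonneg (d i * g i)]
    _ ≤ d i ^ 2 * ρ ^ 2 * ρ := by gcongr; exact sqrt_le_smoothedNorm d g
    _ = d i ^ 2 * ρ ^ 3 := by ring

lemma integral_mul_sq_mul_div_smoothedNorm (hε : 0 < ε) (i : Fin n) :
    ∫ g, g i * (d i ^ 2 * g i / smoothedNorm d ε g) ∂γ =
      ∫ g, d i ^ 2 * (smoothedNorm d ε g ^ 2 - (d i * g i) ^ 2) / smoothedNorm d ε g ^ 3 ∂γ := by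
  obtain ⟨m, rfl⟩ : ∃ m, n = m + 1 := Nat.exists_eq_add_one.2 i.pos
  have h_deriv (x : ℝ) (y : Fin m → ℝ) :
      HasDerivAt (fun t => d i ^ 2 * (i.insertNth t y : Fin (m + 1) → ℝ) i /
          smoothedNorm d ε (i.insertNth t y))
        (d i ^ 2 * (smoothedNorm d ε (i.insertNth x y) ^ 2 -
          (d i * (i.insertNth x y : Fin (m + 1) → ℝ) i) ^ 2) /
          smoothedNorm d ε (i.insertNth x y) ^ 3) x := by
    have hc : 0 < ε + ∑ j, (d (i.succAbove j) * y j) ^ 2 := by positivity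
    simp only [Fin.insertNth_apply_same, smoothedNorm_insertNth]
    refine (hasDerivAt_mul_div_sqrt hc _ _ x).congr_deriv ?_
    rw [sq_sqrt (by positivity)]
    ring
  simpa using integral_sub_mul_pi_gaussianReal (μ := fun _ => 0) (v := fun _ => 1) one_ne_zero
    h_deriv (integrable_sq_mul_div_smoothedNorm d hε i)
    (by simpa using integrable_mul_sq_mul_div_smoothedNorm d hε i)
    (integrable_sq_mul_sub_div_smoothedNorm d hε i)

lemma smoothedNorm_eq_mul_inv_add_sum (hε : 0 < ε) (g : Fin n → ℝ) :
    smoothedNorm d ε g =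
      ε * (smoothedNorm d ε g)⁻¹ + ∑ i, g i * (d i ^ 2 * g i / smoothedNorm d ε g) := by
  have hρ := smoothedNorm_pos d hε g
  have h_sum : ∑ i, g i * (d i ^ 2 * g i / smoothedNorm d ε g) =
      (∑ i, (d i * g i) ^ 2) / smoothedNorm d ε g := by
    rw [sum_div]
    exact sum_congr rfl fun i _ => by ring
  rw [h_sum]
  field_simp
  simpa [mul_pow] using sq_smoothedNorm d hε.le g

lemma sub_mul_inv_smoothedNorm_le_sum {m : ℝ} (hm : ∀ i, |d i| ≤ m) (hε : 0 < ε)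
    (g : Fin n → ℝ) :
    (∑ i, d i ^ 2 - m ^ 2) * (smoothedNorm d ε g)⁻¹ ≤
      ∑ i, d i ^ 2 * (smoothedNorm d ε g ^ 2 - (d i * g i) ^ 2) / smoothedNorm d ε g ^ 3 := by
  set ρ := smoothedNorm d ε g
  have hρ : 0 < ρ := smoothedNorm_pos d hε g
  have h_max : ∑ i, d i ^ 2 * (d i * g i) ^ 2 ≤ m ^ 2 * ∑ i, (d i * g i) ^ 2 := by
    rw [mul_sum]
    refine sum_le_sum fun i _ => mul_le_mul_of_nonneg_right ?_ (sq_nonneg _)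
    rw [← sq_abs (d i)]
    exact pow_le_pow_left₀ (abs_nonneg _) (hm i) 2
  have h_sum : ∑ i, (d i * g i) ^ 2 ≤ ρ ^ 2 := by linarith [sq_smoothedNorm d hε.le g]
  rw [← sum_div, le_div_iff₀ (by positivity)]
  simp only [mul_sub, sum_sub_distrib, ← sum_mul]
  have h_cancel : (∑ i, d i ^ 2 - m ^ 2) * ρ⁻¹ * ρ ^ 3 = (∑ i, d i ^ 2 - m ^ 2) * ρ ^ 2 := by
    field_simp
  rw [h_cancel]
  nlinarith [mul_le_mul_of_nonneg_left h_sum (sq_nonneg m)]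

theorem sub_mul_integral_inv_smoothedNorm_le {m : ℝ} (hm : ∀ i, |d i| ≤ m) (hε : 0 < ε) :
    (∑ i, d i ^ 2 - m ^ 2) * ∫ g, (smoothedNorm d ε g)⁻¹ ∂γ ≤ ∫ g, smoothedNorm d ε g ∂γ := by
  have h_int := integrable_mul_sq_mul_div_smoothedNorm d hε
  have h_int' := integrable_sq_mul_sub_div_smoothedNorm d hε
  calc (∑ i, d i ^ 2 - m ^ 2) * ∫ g, (smoothedNorm d ε g)⁻¹ ∂γ
      = ∫ g, (∑ i, d i ^ 2 - m ^ 2) * (smoothedNorm d ε g)⁻¹ ∂γ := (integral_const_mul _ _).symm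
    _ ≤ ∫ g, ∑ i, d i ^ 2 * (smoothedNorm d ε g ^ 2 - (d i * g i) ^ 2) /
          smoothedNorm d ε g ^ 3 ∂γ :=
        integral_mono ((integrable_inv_smoothedNorm d hε).const_mul _)
          (integrable_finsetSum _ fun i _ => h_int' i) (sub_mul_inv_smoothedNorm_le_sum d hm hε)
    _ = ∫ g, ∑ i, g i * (d i ^ 2 * g i / smoothedNorm d ε g) ∂γ := by
        rw [integral_finsetSum _ fun i _ => h_int' i, integral_finsetSum _ fun i _ => h_int i]
        exact sum_congr rfl fun i _ => (integral_mul_sq_mul_div_smoothedNorm d hε i).symm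
    _ ≤ ∫ g, smoothedNorm d ε g ∂γ := by
        refine integral_mono (integrable_finsetSum _ fun i _ => h_int i)
          (integrable_smoothedNorm d hε.le) fun g => ?_
        have h_nonneg := mul_nonneg hε.le (inv_nonneg.2 (smoothedNorm_pos d hε g).le)
        linarith [smoothedNorm_eq_mul_inv_add_sum d hε g]

theorem sqrt_sub_le_integral_smoothedNorm {m : ℝ} (hm : ∀ i, |d i| ≤ m) (hε : 0 < ε) :
    √(∑ i, d i ^ 2 - m ^ 2) ≤ ∫ g, smoothedNorm d ε g ∂γ := by
  set I := ∫ g, smoothedNorm d ε g ∂γ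
  set J := ∫ g, (smoothedNorm d ε g)⁻¹ ∂γ
  have hI : 0 < I := by
    refine (sqrt_pos.2 hε).trans_le ?_
    simpa using integral_mono (integrable_const _) (integrable_smoothedNorm d hε.le)
      (sqrt_le_smoothedNorm d)
  have hJ : I⁻¹ ≤ J := inv_integral_le_integral_inv (smoothedNorm_pos d hε)
    (integrable_smoothedNorm d hε.le) (integrable_inv_smoothedNorm d hε)
  have hIJ := sub_mul_integral_inv_smoothedNorm_le d hm hε
  rw [sqrt_le_left hI.le]
  rcases le_or_gt (∑ i, d i ^ 2 - m ^ 2) 0 with hS | hS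
  · nlinarith
  calc ∑ i, d i ^ 2 - m ^ 2 = (∑ i, d i ^ 2 - m ^ 2) * I⁻¹ * I := by field_simp
    _ ≤ (∑ i, d i ^ 2 - m ^ 2) * J * I := by gcongr
    _ ≤ I ^ 2 := by nlinarith

end smoothedNorm

/-- For D = diag(d) and g ~ N(0, I_k), E ‖D g‖₂ ≥ √(‖d‖₂² - ‖d‖_∞²). -/
theorem stmt14 {k : ℕ} (d : Fin k → ℝ) :
    Real.sqrt ((∑ i, d i ^ 2) - (⨆ i, |d i|) ^ 2) ≤
      ∫ g : Fin k → ℝ, Real.sqrt (∑ i, (d i * g i) ^ 2)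
        ∂(Measure.pi fun _ : Fin k => gaussianReal 0 1) := by
  have hm (i : Fin k) : |d i| ≤ ⨆ i, |d i| :=
    le_ciSup (f := fun i => |d i|) (Finite.bddAbove_range _) i
  refine le_of_forall_pos_le_add fun δ hδ => ?_
  calc √(∑ i, d i ^ 2 - (⨆ i, |d i|) ^ 2)
      ≤ ∫ g, smoothedNorm d (δ ^ 2) g ∂γ := sqrt_sub_le_integral_smoothedNorm d hm (by positivity)
    _ ≤ ∫ g, (δ + smoothedNorm d 0 g) ∂γ :=
        integral_mono (integrable_smoothedNorm d (by positivity))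
          ((integrable_const δ).add (integrable_smoothedNorm d le_rfl))
          (smoothedNorm_le_add d hδ.le)
    _ = ∫ g, √(∑ i, (d i * g i) ^ 2) ∂γ + δ := by
        rw [integral_add (integrable_const δ) (integrable_smoothedNorm d le_rfl), add_comm]
        simp [smoothedNorm]
end

section
/- Consider the GDA dynamics z_{t+1} = A z_t + Δ_t in ℝ^{2m}, where A satisfies ‖A^t z‖ ≤ γ λ^t ‖z‖ for all t and z with λ = 1 - ηα² ∈ (0,1) and γ ≥ 1, and ‖Δ_t‖ ≤ 2ηβε‖z_t‖ for all t. If 4γβε ≤ α², then for all t ≥ 0, ‖z_t‖ ≤ γ (1 - ηα²/2)^t ‖z₀‖. -/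
open Matrix

/-- Perturbed linear dynamics: if ‖A^t v‖ ≤ γ (1-ηα²)^t ‖v‖, z_{t+1} = A z_t + Δ_t with
‖Δ_t‖ ≤ 2ηβε ‖z_t‖ and 4γβε ≤ α², then ‖z_t‖ ≤ γ (1 - ηα²/2)^t ‖z₀‖ for all t. -/
theorem stmt18 {m : ℕ} (A : Matrix (Fin (2 * m)) (Fin (2 * m)) ℝ)
    (γ α β ε η : ℝ) (hγ : 1 ≤ γ) (hα : 0 < α) (hβ : 0 < β) (hε : 0 < ε) (hη : 0 < η)
    (hlam0 : 0 < 1 - η * α ^ 2)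
    (hA : ∀ (t : ℕ) (v : Fin (2 * m) → ℝ),
      Real.sqrt (∑ i, ((A ^ t).mulVec v) i ^ 2) ≤
        γ * (1 - η * α ^ 2) ^ t * Real.sqrt (∑ i, v i ^ 2))
    (z Δ : ℕ → (Fin (2 * m) → ℝ))
    (hrec : ∀ t, z (t + 1) = A.mulVec (z t) + Δ t)
    (hΔ : ∀ t, Real.sqrt (∑ i, Δ t i ^ 2) ≤
      2 * η * β * ε * Real.sqrt (∑ i, z t i ^ 2))
    (hsmall : 4 * γ * β * ε ≤ α ^ 2) :
    ∀ t : ℕ, Real.sqrt (∑ i, z t i ^ 2) ≤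
      γ * (1 - η * α ^ 2 / 2) ^ t * Real.sqrt (∑ i, z 0 i ^ 2) := by
  set N : (Fin (2 * m) → ℝ) → ℝ := fun v => Real.sqrt (∑ i, v i ^ 2) with hN
  have hNnorm : ∀ v : Fin (2 * m) → ℝ,
      N v = ‖(WithLp.equiv 2 (Fin (2 * m) → ℝ)).symm v‖ := by
    intro v
    rw [EuclideanSpace.norm_eq]
    simp [hN, sq_abs]
  have hNnonneg : ∀ v, 0 ≤ N v := fun v => Real.sqrt_nonneg _
  have hNadd : ∀ v w, N (v + w) ≤ N v + N w := by
    intro v w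
    rw [hNnorm, hNnorm, hNnorm]
    exact norm_add_le _ _
  have hNsum : ∀ (s : Finset ℕ) (f : ℕ → Fin (2 * m) → ℝ),
      N (∑ i ∈ s, f i) ≤ ∑ i ∈ s, N (f i) := by
    intro s f
    simp only [hNnorm]
    have : (WithLp.equiv 2 (Fin (2 * m) → ℝ)).symm (∑ i ∈ s, f i)
        = ∑ i ∈ s, (WithLp.equiv 2 (Fin (2 * m) → ℝ)).symm (f i) := WithLp.toLp_sum (p := 2) (s := s) (f := f)
    rw [this]
    exact norm_sum_le _ _
  set lam := 1 - η * α ^ 2 with hlamdef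
  set c := 2 * η * β * ε * γ with hcdef
  set μ := lam + c with hμdef
  have hc0 : 0 < c := by positivity
  have hμ0 : 0 < μ := by positivity
  -- sum formula
  have hsum : ∀ t, z t = (A ^ t).mulVec (z 0) +
      ∑ i ∈ Finset.range t, (A ^ (t - 1 - i)).mulVec (Δ i) := by
    intro t
    induction t with
    | zero => simp [Matrix.one_mulVec]
    | succ t ih =>
      rw [hrec, ih, Matrix.mulVec_add]
      have hmv : ∀ (s : Finset ℕ) (f : ℕ → Fin (2 * m) → ℝ),
          A.mulVec (∑ i ∈ s, f i) = ∑ i ∈ s, A.mulVec (f i) :=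
        fun s f => map_sum A.mulVecLin f s
      rw [hmv, Finset.sum_range_succ]
      have h1 : A.mulVec ((A ^ t).mulVec (z 0)) = (A ^ (t + 1)).mulVec (z 0) := by
        rw [Matrix.mulVec_mulVec, ← pow_succ']
      have h2 : ∀ i ∈ Finset.range t,
          A.mulVec ((A ^ (t - 1 - i)).mulVec (Δ i)) = (A ^ (t + 1 - 1 - i)).mulVec (Δ i) := by
        intro i hi
        simp only [Finset.mem_range] at hi
        have he : t + 1 - 1 - i = (t - 1 - i) + 1 := by omega
        rw [Matrix.mulVec_mulVec, ← pow_succ', he]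
      rw [Finset.sum_congr rfl h2, h1]
      have h3 : (A ^ (t + 1 - 1 - t)).mulVec (Δ t) = Δ t := by
        simp [Matrix.one_mulVec]
      rw [h3]
      abel
  -- norm bound via triangle inequality
  have hbound : ∀ t, N (z t) ≤ γ * lam ^ t * N (z 0) +
      ∑ i ∈ Finset.range t, γ * lam ^ (t - 1 - i) * (2 * η * β * ε * N (z i)) := by
    intro t
    calc N (z t) ≤ N ((A ^ t).mulVec (z 0)) +
          N (∑ i ∈ Finset.range t, (A ^ (t - 1 - i)).mulVec (Δ i)) := by
          rw [hsum t]; exact hNadd _ _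
      _ ≤ γ * lam ^ t * N (z 0) +
          ∑ i ∈ Finset.range t, γ * lam ^ (t - 1 - i) * (2 * η * β * ε * N (z i)) := by
          refine add_le_add (hA t (z 0)) ?_
          refine (hNsum _ _).trans (Finset.sum_le_sum fun i _ => ?_)
          refine (hA _ (Δ i)).trans ?_
          have h1 : 0 ≤ γ * lam ^ (t - 1 - i) := by positivity
          exact mul_le_mul_of_nonneg_left (hΔ i) h1
  -- discrete Gronwall by strong induction
  have key : ∀ t, N (z t) ≤ γ * μ ^ t * N (z 0) := by
    intro t
    induction t using Nat.strong_induction_on with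
    | _ t ih =>
      have step : ∀ i, γ * lam ^ (t - 1 - i) * (2 * η * β * ε * (γ * μ ^ i * N (z 0)))
          = γ * N (z 0) * (μ ^ i * lam ^ (t - 1 - i) * c) := by
        intro i; rw [hcdef]; ring
      calc N (z t) ≤ γ * lam ^ t * N (z 0) +
            ∑ i ∈ Finset.range t, γ * lam ^ (t - 1 - i) * (2 * η * β * ε * N (z i)) :=
          hbound t
        _ ≤ γ * lam ^ t * N (z 0) +
            ∑ i ∈ Finset.range t, γ * lam ^ (t - 1 - i) *
              (2 * η * β * ε * (γ * μ ^ i * N (z 0))) := by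
            refine add_le_add_right (Finset.sum_le_sum fun i hi => ?_) _
            have h1 : 0 ≤ γ * lam ^ (t - 1 - i) := by positivity
            have h2 : 0 ≤ 2 * η * β * ε := by positivity
            exact mul_le_mul_of_nonneg_left
              (mul_le_mul_of_nonneg_left (ih i (Finset.mem_range.mp hi)) h2) h1
        _ = γ * N (z 0) * (lam ^ t +
            (∑ i ∈ Finset.range t, μ ^ i * lam ^ (t - 1 - i)) * c) := by
            rw [Finset.sum_congr rfl fun i _ => step i, ← Finset.mul_sum, ← Finset.sum_mul]
            ring
        _ = γ * μ ^ t * N (z 0) := by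
            have hg : (∑ i ∈ Finset.range t, μ ^ i * lam ^ (t - 1 - i)) * (μ - lam)
                = μ ^ t - lam ^ t := geom_sum₂_mul μ lam t
            have hμc : μ - lam = c := by rw [hμdef]; ring
            rw [hμc] at hg
            rw [hg]
            ring
  intro t
  have hμν : μ ≤ 1 - η * α ^ 2 / 2 := by
    rw [hμdef, hcdef, hlamdef]
    nlinarith [hη.le]
  have hfin : γ * μ ^ t * N (z 0) ≤ γ * (1 - η * α ^ 2 / 2) ^ t * N (z 0) := by
    have hp := pow_le_pow_left₀ hμ0.le hμν t
    have hγ0 : (0:ℝ) ≤ γ := by linarith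
    exact mul_le_mul_of_nonneg_right (mul_le_mul_of_nonneg_left hp hγ0) (hNnonneg _)
  exact (key t).trans hfin
end
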